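/- Let 0 < ε < 2/5 and 0 < δ ≤ 1/30. Let Γ be a D-regular graph on n vertices such that at least εn vertices v satisfy ‖Q_v^τ − U‖ < δ. Then there exists a set V' of at most 5δn vertices such that the induced subgraph Γ' on V(Γ)\V', with n' = |V(Γ')| vertices, satisfies: every X ⊆ V(Γ') with |X| ≤ n'/2 has e_{Γ'}(X, V(Γ')\X) ≥ (εD/(16τ))·|X|. -/

import Mathlib

open Finset
open scoped Classical

/-- The transition matrix of the nearest-neighbor random walk on `G`. -/
noncomputable def rwStep {V : Type*} [Fintype V] (G : SimpleGraph V) : Matrix V V ℝ :=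
  fun u w => if G.Adj u w then (1 : ℝ) / (G.degree u) else 0

/-- The distribution of the nearest-neighbor random walk on `G` after `t` steps
started at `v`:  `rwDist G v t u = Pr[Q_v^t = u]`. -/
noncomputable def rwDist {V : Type*} [Fintype V] (G : SimpleGraph V) (v : V) (t : ℕ) :
    V → ℝ := fun u => (rwStep G ^ t) v u

/-- Total variation distance between two (densities of) distributions on a finite set. -/
noncomputable def tvDist {V : Type*} [Fintype V] (p q : V → ℝ) : ℝ :=
  (∑ u, |p u - q u|) / 2

/-- The uniform distribution on a finite set. -/
noncomputable def unif (V : Type*) [Fintype V] : V → ℝ :=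
  fun _ => 1 / (Fintype.card V)

/-- The number of edges between two disjoint vertex sets. -/
noncomputable def edgesBetween {V : Type*} [Fintype V] (G : SimpleGraph V)
    (X Y : Finset V) : ℕ :=
  ((X ×ˢ Y).filter fun p => G.Adj p.1 p.2).card


section Helpers
variable {V : Type*} [Fintype V] (G : SimpleGraph V) {D : ℕ}

variable {V : Type*} [Fintype V] (G : SimpleGraph V) {D : ℕ}

lemma rwStep_nonneg (u w : V) : 0 ≤ rwStep G u w := by
  unfold rwStep; split_ifs <;> positivity

lemma rwStep_symm (hreg : G.IsRegularOfDegree D) (u w : V) :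
    rwStep G u w = rwStep G w u := by
  unfold rwStep
  rw [hreg u, hreg w, G.adj_comm]

lemma rwStep_row_sum (hD : 0 < D) (hreg : G.IsRegularOfDegree D) (u : V) :
    ∑ w, rwStep G u w = 1 := by
  unfold rwStep
  rw [← Finset.sum_filter]
  rw [Finset.sum_const, ← SimpleGraph.neighborFinset_eq_filter, ← SimpleGraph.degree,
    hreg u]
  field_simp
  rw [nsmul_eq_mul]; exact mul_one_div_cancel (Nat.cast_ne_zero.mpr hD.ne')

lemma pow_entry_nonneg : ∀ (t : ℕ) (u w : V), 0 ≤ (rwStep G ^ t) u w := by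
  intro t
  induction t with
  | zero => intro u w; simp [Matrix.one_apply]; split_ifs <;> norm_num
  | succ t ih =>
    intro u w
    rw [pow_succ, Matrix.mul_apply]
    exact Finset.sum_nonneg fun x _ => mul_nonneg (ih u x) (rwStep_nonneg G x w)

lemma pow_row_sum (hD : 0 < D) (hreg : G.IsRegularOfDegree D) :
    ∀ (t : ℕ) (u : V), ∑ w, (rwStep G ^ t) u w = 1 := by
  intro t
  induction t with
  | zero => intro u; simp [Matrix.one_apply]
  | succ t ih =>
    intro u
    simp only [pow_succ, Matrix.mul_apply]
    rw [Finset.sum_comm]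
    calc ∑ x, ∑ w, (rwStep G ^ t) u x * rwStep G x w
        = ∑ x, (rwStep G ^ t) u x * ∑ w, rwStep G x w := by
          simp [Finset.mul_sum]
      _ = 1 := by
          simp only [rwStep_row_sum G hD hreg, mul_one]; exact ih u

lemma pow_symm (hreg : G.IsRegularOfDegree D) (t : ℕ) (u w : V) :
    (rwStep G ^ t) u w = (rwStep G ^ t) w u := by
  have hT : (rwStep G).transpose = rwStep G := by
    ext a b; exact rwStep_symm G hreg b a
  have h2 : ((rwStep G) ^ t).transpose = (rwStep G) ^ t := by
    rw [Matrix.transpose_pow, hT]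
  conv_lhs => rw [← h2]
  rfl

lemma pow_col_sum (hD : 0 < D) (hreg : G.IsRegularOfDegree D) (t : ℕ) (u : V) :
    ∑ v, (rwStep G ^ t) v u = 1 := by
  calc ∑ v, (rwStep G ^ t) v u = ∑ v, (rwStep G ^ t) u v := by
        exact Finset.sum_congr rfl fun v _ => pow_symm G hreg t v u
    _ = 1 := pow_row_sum G hD hreg t u


variable {V : Type*} [Fintype V] (G : SimpleGraph V) {D : ℕ}

lemma edgesBetween_symm (X Y : Finset V) :
    edgesBetween G X Y = edgesBetween G Y X := by
  unfold edgesBetween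
  apply Finset.card_bij' (fun p _ => p.swap) (fun p _ => p.swap)
  · intro p _; rfl
  · intro p _; rfl
  · intro p hp
    simp only [Finset.mem_filter, Finset.mem_product] at hp ⊢
    exact ⟨⟨hp.1.2, hp.1.1⟩, hp.2.symm⟩
  · intro p hp
    simp only [Finset.mem_filter, Finset.mem_product] at hp ⊢
    exact ⟨⟨hp.1.2, hp.1.1⟩, hp.2.symm⟩

lemma edgesBetween_mono_right (X : Finset V) {Y Y' : Finset V} (h : Y ⊆ Y') :
    edgesBetween G X Y ≤ edgesBetween G X Y' := by
  unfold edgesBetween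
  apply Finset.card_le_card
  apply Finset.filter_subset_filter
  exact Finset.product_subset_product_right h

lemma edgesBetween_union_le (A B C : Finset V) :
    edgesBetween G (A ∪ B) C ≤ edgesBetween G A C + edgesBetween G B C := by
  unfold edgesBetween
  rw [Finset.union_product, Finset.filter_union]
  exact Finset.card_union_le _ _

lemma rwStep_pair_sum (hD : 0 < D) (hreg : G.IsRegularOfDegree D)
    (A B : Finset V) :
    ∑ u ∈ A, ∑ w ∈ B, rwStep G u w = (edgesBetween G A B : ℝ) / D := by
  unfold rwStep edgesBetween
  rw [← Finset.sum_product']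
  rw [Finset.sum_congr rfl (fun p _ => by rw [hreg p.1])]
  rw [← Finset.sum_filter]
  rw [Finset.sum_const, nsmul_eq_mul]
  field_simp


lemma escape_bound (hD : 0 < D) (hreg : G.IsRegularOfDegree D)
    (U : Finset V) (v : V) (hv : v ∉ U) :
    ∀ t : ℕ, ∑ u ∈ U, (rwStep G ^ t) v u ≤
      ∑ s ∈ Finset.range t, ∑ u ∈ Uᶜ, ∑ w ∈ U, (rwStep G ^ s) v u * rwStep G u w := by
  intro t
  induction t with
  | zero =>
    simp only [pow_zero, Matrix.one_apply, Finset.range_zero, Finset.sum_empty]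
    rw [Finset.sum_ite_eq]
    simp [hv]
  | succ t ih =>
    rw [Finset.sum_range_succ]
    have expand : ∑ u ∈ U, (rwStep G ^ (t+1)) v u =
        (∑ u ∈ U, (rwStep G ^ t) v u * ∑ w ∈ U, rwStep G u w) +
        ∑ u ∈ Uᶜ, ∑ w ∈ U, (rwStep G ^ t) v u * rwStep G u w := by
      simp only [pow_succ, Matrix.mul_apply]
      rw [Finset.sum_comm]
      rw [← Finset.sum_add_sum_compl U
        (fun u => ∑ w ∈ U, (rwStep G ^ t) v u * rwStep G u w)]
      congr 1
      exact Finset.sum_congr rfl fun u _ => by rw [Finset.mul_sum]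
    rw [expand]
    have h1 : ∑ u ∈ U, (rwStep G ^ t) v u * ∑ w ∈ U, rwStep G u w ≤
        ∑ u ∈ U, (rwStep G ^ t) v u := by
      apply Finset.sum_le_sum
      intro u _
      have hrow : ∑ w ∈ U, rwStep G u w ≤ 1 := by
        rw [← rwStep_row_sum G hD hreg u]
        exact Finset.sum_le_sum_of_subset_of_nonneg (Finset.subset_univ U)
          (fun w _ _ => rwStep_nonneg G u w)
      have := pow_entry_nonneg G t v u
      nlinarith
    linarith [ih]

lemma cross_sum_bound (hD : 0 < D) (hreg : G.IsRegularOfDegree D)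
    (T U : Finset V) (s : ℕ) :
    ∑ v ∈ T, ∑ u ∈ Uᶜ, ∑ w ∈ U, (rwStep G ^ s) v u * rwStep G u w ≤
      (edgesBetween G Uᶜ U : ℝ) / D := by
  rw [← rwStep_pair_sum G hD hreg]
  rw [Finset.sum_comm]
  apply Finset.sum_le_sum
  intro u _
  rw [Finset.sum_comm]
  apply Finset.sum_le_sum
  intro w _
  calc ∑ v ∈ T, (rwStep G ^ s) v u * rwStep G u w
      = (∑ v ∈ T, (rwStep G ^ s) v u) * rwStep G u w := by rw [Finset.sum_mul]
    _ ≤ 1 * rwStep G u w := by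
        apply mul_le_mul_of_nonneg_right _ (rwStep_nonneg G u w)
        rw [← pow_col_sum G hD hreg s u]
        exact Finset.sum_le_sum_of_subset_of_nonneg (Finset.subset_univ T)
          (fun x _ _ => pow_entry_nonneg G s x u)
    _ = rwStep G u w := one_mul _

lemma walk_escape (hD : 0 < D) (hreg : G.IsRegularOfDegree D)
    (T U : Finset V) (hTU : ∀ v ∈ T, v ∉ U) (t : ℕ) :
    ∑ v ∈ T, ∑ u ∈ U, (rwStep G ^ t) v u ≤ t * (edgesBetween G Uᶜ U : ℝ) / D := by
  calc ∑ v ∈ T, ∑ u ∈ U, (rwStep G ^ t) v u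
      ≤ ∑ v ∈ T, ∑ s ∈ Finset.range t, ∑ u ∈ Uᶜ, ∑ w ∈ U,
          (rwStep G ^ s) v u * rwStep G u w :=
        Finset.sum_le_sum fun v hv => escape_bound G hD hreg U v (hTU v hv) t
    _ = ∑ s ∈ Finset.range t, ∑ v ∈ T, ∑ u ∈ Uᶜ, ∑ w ∈ U,
          (rwStep G ^ s) v u * rwStep G u w := Finset.sum_comm
    _ ≤ ∑ s ∈ Finset.range t, (edgesBetween G Uᶜ U : ℝ) / D :=
        Finset.sum_le_sum fun s _ => cross_sum_bound G hD hreg T U s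
    _ = t * (edgesBetween G Uᶜ U : ℝ) / D := by
        rw [Finset.sum_const, Finset.card_range, nsmul_eq_mul, mul_div_assoc]

lemma mix_lower {τ : ℕ} {δ : ℝ} (v : V)
    (hv : tvDist (rwDist G v τ) (unif V) < δ) (U : Finset V) :
    (U.card : ℝ) / (Fintype.card V) - 2 * δ ≤ ∑ u ∈ U, (rwStep G ^ τ) v u := by
  have h1 : ∑ u, |rwDist G v τ u - unif V u| < 2 * δ := by
    unfold tvDist at hv; linarith
  have h2 : ∑ u ∈ U, |rwDist G v τ u - unif V u| ≤
      ∑ u, |rwDist G v τ u - unif V u| :=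
    Finset.sum_le_sum_of_subset_of_nonneg (Finset.subset_univ U)
      (fun u _ _ => abs_nonneg _)
  have h3 : ∑ u ∈ U, (rwDist G v τ u - unif V u) ≥
      -∑ u ∈ U, |rwDist G v τ u - unif V u| := by
    rw [← Finset.sum_neg_distrib]
    exact Finset.sum_le_sum fun u _ => neg_abs_le _
  have h4 : ∑ u ∈ U, (rwDist G v τ u - unif V u) =
      ∑ u ∈ U, (rwStep G ^ τ) v u - (U.card : ℝ) / (Fintype.card V) := by
    rw [Finset.sum_sub_distrib]
    congr 1
    unfold unif
    rw [Finset.sum_const, nsmul_eq_mul]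
    ring
  rw [h4] at h3
  linarith

set_option maxHeartbeats 1000000 in
lemma no_bad_set {τ n : ℕ} {ε δ : ℝ} (hD : 0 < D) (hreg : G.IsRegularOfDegree D)
    (hn : n = Fintype.card V) (hτ : 0 < τ) (hε : 0 < ε) (hδ : 0 < δ) (hδ' : δ ≤ 1 / 30)
    (hmix : ε * n ≤
      ((Finset.univ.filter fun v : V =>
          tvDist (rwDist G v τ) (unif V) < δ).card : ℝ))
    (U : Finset V)
    (hub : (edgesBetween G U Uᶜ : ℝ) ≤ ε * D / (16 * τ) * U.card)
    (h1 : 5 * δ * n < U.card) (h2 : (U.card : ℝ) ≤ 5 * δ * n + n / 2) : False := by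
  set S := Finset.univ.filter fun v : V =>
      tvDist (rwDist G v τ) (unif V) < δ with hSdef
  -- basic positivity
  have hUpos : (0 : ℝ) < U.card := by
    have : (0:ℝ) ≤ 5 * δ * n := by positivity
    linarith
  have hUne : U.Nonempty := by
    rw [← Finset.card_pos]; exact_mod_cast hUpos
  have hnpos : 0 < n := by
    have := Finset.card_le_univ U
    have h := Fintype.card_pos_iff.mpr ⟨hUne.choose⟩
    omega
  have hnr : (0:ℝ) < (n:ℝ) := by exact_mod_cast hnpos
  have hUn : (U.card : ℝ) ≤ n := by
    rw [hn]; exact_mod_cast Finset.card_le_univ U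
  -- split S
  have hsplit : (S ∩ U).card + (S ∩ Uᶜ).card = S.card := by
    rw [← Finset.card_union_of_disjoint]
    · rw [← Finset.inter_union_distrib_left, Finset.union_compl, Finset.inter_univ]
    · exact Finset.disjoint_left.mpr fun a ha hb => by
        simp only [Finset.mem_inter, Finset.mem_compl] at ha hb
        exact hb.2 ha.2
  -- the escape upper bound, shared
  have hDr : (0:ℝ) < (D:ℝ) := by exact_mod_cast hD
  have hτr : (0:ℝ) < (τ:ℝ) := by exact_mod_cast hτ
  have hesc : (τ : ℝ) * (edgesBetween G U Uᶜ : ℝ) / D ≤ ε * U.card / 16 := by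
    rw [div_le_iff₀ hDr]
    have h16 : (0:ℝ) < 16 * τ := by linarith
    have := mul_le_mul_of_nonneg_left hub hτr.le
    calc (τ:ℝ) * (edgesBetween G U Uᶜ : ℝ)
        ≤ (τ:ℝ) * (ε * D / (16 * τ) * U.card) := this
      _ = (ε * U.card / 16) * D := by field_simp
  rcases le_or_gt (ε * n / 2) ((S ∩ U).card : ℝ) with hA | hA
  · -- good vertices inside U; walks escape to Uᶜ
    set T := S ∩ U with hT
    have hlow : ∀ v ∈ T, ((Uᶜ.card : ℝ)) / (Fintype.card V) - 2 * δ ≤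
        ∑ u ∈ Uᶜ, (rwStep G ^ τ) v u := by
      intro v hv
      have hvS : v ∈ S := (Finset.mem_inter.mp hv).1
      rw [hSdef, Finset.mem_filter] at hvS
      exact mix_lower G v hvS.2 Uᶜ
    have hcompl : ((Uᶜ.card : ℝ)) = n - U.card := by
      rw [Finset.card_compl, hn]
      have := Finset.card_le_univ U
      push_cast [Nat.cast_sub this]
      ring
    have hsum_low : (T.card : ℝ) * ((n - U.card)/n - 2*δ) ≤
        ∑ v ∈ T, ∑ u ∈ Uᶜ, (rwStep G ^ τ) v u := by
      calc (T.card : ℝ) * ((n - U.card)/n - 2*δ)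
          = ∑ _v ∈ T, ((n - U.card)/n - 2*δ) := by
            rw [Finset.sum_const, nsmul_eq_mul]
        _ ≤ _ := Finset.sum_le_sum fun v hv => by
            have := hlow v hv
            rw [hcompl, ← hn] at this
            exact this
    have hsum_up : ∑ v ∈ T, ∑ u ∈ Uᶜ, (rwStep G ^ τ) v u ≤ ε * U.card / 16 := by
      have := walk_escape G hD hreg T Uᶜ
        (fun v hv => by
          have := (Finset.mem_inter.mp hv).2
          simp only [Finset.mem_compl] at this ⊢
          simpa using this) τ
      have hesc2 : (τ:ℝ) * (edgesBetween G Uᶜᶜ Uᶜ : ℝ) / D ≤ ε * U.card / 16 := by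
        rw [compl_compl]; exact hesc
      exact this.trans hesc2
    -- numeric contradiction
    have hx : (0:ℝ) ≤ (n - U.card)/n - 2*δ := by
      have h5 : (1:ℝ)/2 - 5*δ ≤ ((n:ℝ) - U.card)/n := by
        rw [le_div_iff₀ hnr]; nlinarith
      linarith
    have key : (ε * n / 2) * ((n - U.card)/n - 2*δ) ≤ ε * U.card / 16 := by
      calc (ε * n / 2) * ((n - U.card)/n - 2*δ)
          ≤ (T.card : ℝ) * ((n - U.card)/n - 2*δ) :=
            mul_le_mul_of_nonneg_right hA hx
        _ ≤ _ := hsum_low.trans hsum_up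
    have expand : (ε * n / 2) * ((n - U.card)/n - 2*δ)
        = ε * (n - U.card) / 2 - ε * δ * n := by
      field_simp
    rw [expand] at key
    have e1 : ε * (U.card:ℝ) ≤ ε * (5 * δ * n + n / 2) :=
      mul_le_mul_of_nonneg_left h2 hε.le
    have e2 : ε * n * δ ≤ ε * n * (1/30) :=
      mul_le_mul_of_nonneg_left hδ' (mul_pos hε hnr).le
    nlinarith [mul_pos hε hnr]
  · -- good vertices outside U; walks enter U
    set T := S ∩ Uᶜ with hT
    have hB : (ε * n / 2) ≤ (T.card : ℝ) := by
      have hScard : ε * n ≤ S.card := hmix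
      have : ((S ∩ U).card : ℝ) + (T.card : ℝ) = S.card := by exact_mod_cast hsplit
      linarith
    have hsum_low : (T.card : ℝ) * ((U.card : ℝ)/n - 2*δ) ≤
        ∑ v ∈ T, ∑ u ∈ U, (rwStep G ^ τ) v u := by
      calc (T.card : ℝ) * ((U.card : ℝ)/n - 2*δ)
          = ∑ _v ∈ T, ((U.card : ℝ)/n - 2*δ) := by
            rw [Finset.sum_const, nsmul_eq_mul]
        _ ≤ _ := Finset.sum_le_sum fun v hv => by
            have hvS : v ∈ S := (Finset.mem_inter.mp hv).1
            rw [hSdef, Finset.mem_filter] at hvS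
            have := mix_lower G v hvS.2 U
            rw [← hn] at this
            exact this
    have hsum_up : ∑ v ∈ T, ∑ u ∈ U, (rwStep G ^ τ) v u ≤ ε * U.card / 16 := by
      have := walk_escape G hD hreg T U
        (fun v hv => by
          have := (Finset.mem_inter.mp hv).2
          simpa using this) τ
      rw [edgesBetween_symm G U Uᶜ] at hesc
      exact this.trans hesc
    have hx : (0:ℝ) ≤ (U.card : ℝ)/n - 2*δ := by
      have h5 : 5*δ < (U.card : ℝ)/n := by
        rw [lt_div_iff₀ hnr]; exact h1
      linarith
    have key : (ε * n / 2) * ((U.card : ℝ)/n - 2*δ) ≤ ε * U.card / 16 :=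
      (mul_le_mul_of_nonneg_right hB hx).trans (hsum_low.trans hsum_up)
    have expand : (ε * n / 2) * ((U.card : ℝ)/n - 2*δ)
        = ε * U.card / 2 - ε * δ * n := by
      field_simp
    rw [expand] at key
    nlinarith [mul_lt_mul_of_pos_left h1 hε, mul_pos hε hUpos]

lemma removal {τ n : ℕ} {ε δ : ℝ} (hD : 0 < D) (hreg : G.IsRegularOfDegree D)
    (hn : n = Fintype.card V) (hτ : 0 < τ) (hε : 0 < ε) (hδ : 0 < δ) (hδ' : δ ≤ 1 / 30)
    (hmix : ε * n ≤
      ((Finset.univ.filter fun v : V =>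
          tvDist (rwDist G v τ) (unif V) < δ).card : ℝ)) :
    ∀ m : ℕ, ∀ R : Finset V, R.card = m →
      (edgesBetween G Rᶜ R : ℝ) ≤ ε * D / (16 * τ) * Rᶜ.card →
      ((Rᶜ.card : ℝ)) ≤ 5 * δ * n →
      ∃ V' : Finset V, (V'.card : ℝ) ≤ 5 * δ * n ∧
        ∀ X : Finset V, X ⊆ V'ᶜ → (X.card : ℝ) ≤ (V'ᶜ.card : ℝ) / 2 →
          ε * D / (16 * τ) * X.card ≤ (edgesBetween G X (V'ᶜ \ X) : ℝ) := by
  intro m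
  induction m using Nat.strong_induction_on with
  | _ m ih =>
    intro R hR hbound hsize
    by_cases hgood : ∀ X : Finset V, X ⊆ R → (X.card : ℝ) ≤ (R.card : ℝ) / 2 →
        ε * D / (16 * τ) * X.card ≤ (edgesBetween G X (R \ X) : ℝ)
    · refine ⟨Rᶜ, hsize, ?_⟩
      simpa only [compl_compl] using hgood
    · push_neg at hgood
      obtain ⟨X, hXR, hXhalf, hXbad⟩ := hgood
      have hXne : X.Nonempty := by
        rcases X.eq_empty_or_nonempty with h | h
        · exfalso
          subst h
          simp only [edgesBetween, Finset.empty_product, Finset.filter_empty,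
            Finset.card_empty, Nat.cast_zero, Finset.card_empty, mul_zero] at hXbad
          exact absurd hXbad (lt_irrefl 0)
        · exact h
      set R' := R \ X with hR'
      have hcompl' : R'ᶜ = Rᶜ ∪ X := by
        ext a
        simp only [hR', Finset.mem_compl, Finset.mem_sdiff, Finset.mem_union]
        tauto
      have hdisj : Disjoint Rᶜ X :=
        Finset.disjoint_left.mpr fun a ha hb => (Finset.mem_compl.mp ha) (hXR hb)
      have hcard' : R'ᶜ.card = Rᶜ.card + X.card := by
        rw [hcompl', Finset.card_union_of_disjoint hdisj]
      have hbound' : (edgesBetween G R'ᶜ R' : ℝ) ≤ ε * D / (16 * τ) * R'ᶜ.card := by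
      -- boundary bound
        have step1 : (edgesBetween G R'ᶜ R' : ℝ) ≤
            (edgesBetween G Rᶜ R' : ℝ) + (edgesBetween G X R' : ℝ) := by
          rw [hcompl']
          exact_mod_cast edgesBetween_union_le G Rᶜ X R'
        have step2 : (edgesBetween G Rᶜ R' : ℝ) ≤ (edgesBetween G Rᶜ R : ℝ) := by
          exact_mod_cast edgesBetween_mono_right G Rᶜ (Finset.sdiff_subset)
        have step3 : (edgesBetween G X R' : ℝ) < ε * D / (16 * τ) * X.card := hXbad
        rw [hcard']
        push_cast
        have := hbound
        nlinarith [step1, step2, step3]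
      have hlt : R'.card < m := by
        have h1 : R'.card = R.card - X.card := Finset.card_sdiff_of_subset hXR
        have h2 : X.card ≤ R.card := Finset.card_le_card hXR
        have h3 : 0 < X.card := Finset.card_pos.mpr hXne
        omega
      by_cases hsz : ((R'ᶜ.card : ℝ)) ≤ 5 * δ * n
      · exact ih R'.card hlt R' rfl hbound' hsz
      · exfalso
        push_neg at hsz
        apply no_bad_set G hD hreg hn hτ hε hδ hδ' hmix R'ᶜ
        · rw [compl_compl]; exact hbound'
        · exact hsz
        · rw [hcard']
          push_cast
          have hXn : (X.card : ℝ) ≤ (n : ℝ) / 2 := by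
            have hRn : (R.card : ℝ) ≤ (n : ℝ) := by
              rw [hn]; exact_mod_cast Finset.card_le_univ R
            linarith
          linarith

end Helpers

/-- If `Γ` is a `D`-regular graph on `n` vertices in which at least `εn` vertices `v` satisfy
`‖Q_v^τ − U‖ < δ` (with `0 < ε < 2/5`, `0 < δ ≤ 1/30`), then one can delete at most `5δn`
vertices so that in the remaining induced subgraph `Γ'` every set `X` of at most half of
the vertices satisfies `e_{Γ'}(X, V(Γ')∖X) ≥ (εD/(16τ))·|X|`. -/
theorem almost_spanning_expander {V : Type*} [Fintype V]
    (Γ : SimpleGraph V) (D : ℕ) (hreg : Γ.IsRegularOfDegree D)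
    (n : ℕ) (hn : n = Fintype.card V) (τ : ℕ) (hτ : 0 < τ)
    (ε δ : ℝ) (hε : 0 < ε) (hε' : ε < 2 / 5) (hδ : 0 < δ) (hδ' : δ ≤ 1 / 30)
    (hmix : ε * n ≤
      ((Finset.univ.filter fun v : V =>
          tvDist (rwDist Γ v τ) (unif V) < δ).card : ℝ)) :
    ∃ V' : Finset V, (V'.card : ℝ) ≤ 5 * δ * n ∧
      ∀ X : Finset V, X ⊆ V'ᶜ → (X.card : ℝ) ≤ (V'ᶜ.card : ℝ) / 2 →
        ε * D / (16 * τ) * X.card ≤ (edgesBetween Γ X (V'ᶜ \ X) : ℝ) := by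
  by_cases hn0 : n = 0
  · have hVc : Fintype.card V = 0 := by omega
    haveI hVe : IsEmpty V := Fintype.card_eq_zero_iff.mp hVc
    refine ⟨∅, ?_, ?_⟩
    · simp only [Finset.card_empty, Nat.cast_zero, hn0, mul_zero]
      norm_num
    · intro X _ _
      have hX : X = ∅ := Finset.eq_empty_of_isEmpty X
      subst hX
      simp [edgesBetween]
  · by_cases hD0 : D = 0
    · exfalso
      have hstep : rwStep Γ = 0 := by
        ext u w
        simp only [rwStep, Matrix.zero_apply]
        rw [if_neg]
        intro hadj
        have hdeg : 0 < Γ.degree u := by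
          rw [SimpleGraph.degree_pos_iff_exists_adj]
          exact ⟨w, hadj⟩
        rw [hreg u, hD0] at hdeg
        exact absurd hdeg (lt_irrefl 0)
      have hpow : rwStep Γ ^ τ = 0 := by rw [hstep, zero_pow hτ.ne']
      have hfilter : (Finset.univ.filter fun v : V =>
          tvDist (rwDist Γ v τ) (unif V) < δ) = ∅ := by
        rw [Finset.filter_eq_empty_iff]
        intro v _
        have hcard : (0:ℝ) < (Fintype.card V : ℝ) := by
          have : 0 < Fintype.card V := by omega
          exact_mod_cast this
        have htv : tvDist (rwDist Γ v τ) (unif V) = 1 / 2 := by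
          unfold tvDist rwDist unif
          simp only [hpow, Matrix.zero_apply, zero_sub, abs_neg]
          rw [Finset.sum_congr rfl fun u _ => abs_of_nonneg (by positivity)]
          rw [Finset.sum_const, nsmul_eq_mul, Finset.card_univ]
          field_simp
        rw [htv]
        push_neg
        linarith
      rw [hfilter] at hmix
      simp only [Finset.card_empty, Nat.cast_zero] at hmix
      have hnr : (0:ℝ) < (n:ℝ) := by
        have : 0 < n := Nat.pos_of_ne_zero hn0
        exact_mod_cast this
      nlinarith
    · have hD : 0 < D := Nat.pos_of_ne_zero hD0
      apply removal Γ hD hreg hn hτ hε hδ hδ' hmix Finset.univ.card Finset.univ rfl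
      · simp only [Finset.compl_univ, edgesBetween, Finset.empty_product,
          Finset.filter_empty, Finset.card_empty, Nat.cast_zero, mul_zero, le_refl]
      · simp only [Finset.compl_univ, Finset.card_empty, Nat.cast_zero]
        positivity
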